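/- arXiv:1108.5533 — 2 statements merged into one kernel-verified Lean document; each statement's English description precedes it below -/
import Mathlib

section
/- Let β^d minimize ‖β‖₁ subject to ‖X^⊤(y − Xβ)‖_∞ ≤ λ_d, where y = Xβ* + ε, ‖X^⊤ε‖_∞ ≤ λ_n⁰, and λ_d ≥ λ_n⁰. Set h = β* − β^d. Then for all subsets S ⊆ {1,…,p}: (1/(4λ_d))[‖Xh‖₂² + (λ_d − λ_n⁰)‖h‖₁] ≤ ‖h_S‖₁ + ‖β*_{S^c}‖₁. -/
/-!
Since `‖X^⊤ε‖_∞ ≤ λ⁰ ≤ λ_d`, the target `β*` is feasible, so `‖β^d‖₁ ≤ ‖β*‖₁`; splitting both norms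
along `S` and `Sᶜ` gives the cone bound `‖h‖₁ ≤ 2(‖h_S‖₁ + ‖β*_{Sᶜ}‖₁)`. On the other hand
`X^⊤Xh = X^⊤(y - Xβ^d) - X^⊤ε` has sup norm at most `λ_d + λ⁰`, so by Hölder
`‖Xh‖₂² = ⟨h, X^⊤Xh⟩ ≤ (λ_d + λ⁰)‖h‖₁`, i.e. `‖Xh‖₂² + (λ_d - λ⁰)‖h‖₁ ≤ 2λ_d‖h‖₁`. Combine the two
bounds when `λ_d > 0`; when `λ_d ≤ 0` the left-hand side is nonpositive.
-/

open Finset Matrix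

/-- The ℓ¹ norm of a vector. -/
noncomputable def l1 {p : ℕ} (v : Fin p → ℝ) : ℝ := ∑ i, |v i|

/-- The ℓ² norm of a vector. -/
noncomputable def l2 {n : ℕ} (v : Fin n → ℝ) : ℝ := Real.sqrt (∑ i, (v i) ^ 2)

/-- Restriction of a vector to a set of coordinates (zero elsewhere). -/
def restr {p : ℕ} (v : Fin p → ℝ) (S : Finset (Fin p)) : Fin p → ℝ :=
  fun i => if i ∈ S then v i else 0

/-- The Universal Distortion Property UDP(S₀, κ₀, Δ). -/
def UDP {n p : ℕ} (X : Matrix (Fin n) (Fin p) ℝ) (S₀ κ₀ Δ : ℝ) : Prop :=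
  ∀ γ : Fin p → ℝ, ∀ s : ℕ, 1 ≤ s → (s : ℝ) ≤ S₀ →
    ∀ S : Finset (Fin p), S.card = s →
      l1 (restr γ S) ≤ Δ * Real.sqrt s * l2 (X.mulVec γ) + κ₀ * l1 γ

lemma l1_nonneg {p : ℕ} (v : Fin p → ℝ) : 0 ≤ l1 v :=
  sum_nonneg fun i _ => abs_nonneg (v i)

lemma l1_sub_le {p : ℕ} (u v : Fin p → ℝ) : l1 (u - v) ≤ l1 u + l1 v := by
  unfold l1
  rw [← sum_add_distrib]
  exact sum_le_sum fun i _ => abs_sub (u i) (v i)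

lemma l1_sub_l1_le {p : ℕ} (u v : Fin p → ℝ) : l1 u - l1 v ≤ l1 (u - v) := by
  unfold l1
  rw [← sum_sub_distrib]
  exact sum_le_sum fun i _ => abs_sub_abs_le_abs_sub (u i) (v i)

lemma l1_eq_l1_restr_add_l1_restr_compl {p : ℕ} (v : Fin p → ℝ) (S : Finset (Fin p)) :
    l1 v = l1 (restr v S) + l1 (restr v Sᶜ) := by
  unfold l1 restr
  rw [← sum_add_distrib]
  refine sum_congr rfl fun i _ => ?_
  by_cases hi : i ∈ S <;> simp [hi]

lemma restr_sub {p : ℕ} (u v : Fin p → ℝ) (S : Finset (Fin p)) :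
    restr (u - v) S = restr u S - restr v S := by
  ext i
  by_cases hi : i ∈ S <;> simp [restr, hi]

lemma l1_sub_le_two_mul_of_l1_le {p : ℕ} {β β' : Fin p → ℝ} (hle : l1 β' ≤ l1 β)
    (S : Finset (Fin p)) :
    l1 (β - β') ≤ 2 * (l1 (restr (β - β') S) + l1 (restr β Sᶜ)) := by
  have hS := l1_sub_l1_le (restr β S) (restr β' S)
  have hSc := l1_sub_le (restr β Sᶜ) (restr β' Sᶜ)
  rw [← restr_sub] at hS hSc
  linarith [l1_eq_l1_restr_add_l1_restr_compl β S, l1_eq_l1_restr_add_l1_restr_compl β' S,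
    l1_eq_l1_restr_add_l1_restr_compl (β - β') S]

lemma dotProduct_le_l1_mul {p : ℕ} {u v : Fin p → ℝ} {c : ℝ} (hv : ∀ j, |v j| ≤ c) :
    u ⬝ᵥ v ≤ l1 u * c := by
  unfold l1
  rw [sum_mul]
  refine sum_le_sum fun j _ => ?_
  calc u j * v j ≤ |u j * v j| := le_abs_self _
    _ = |u j| * |v j| := abs_mul _ _
    _ ≤ |u j| * c := mul_le_mul_of_nonneg_left (hv j) (abs_nonneg _)

lemma sum_sq_mulVec_eq_dotProduct {m k : Type*} [Fintype m] [Fintype k] (X : Matrix m k ℝ)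
    (h : k → ℝ) : ∑ i, (X *ᵥ h) i ^ 2 = h ⬝ᵥ (Xᵀ *ᵥ (X *ᵥ h)) := by
  rw [dotProduct_mulVec, vecMul_transpose]
  simp [dotProduct, sq]

lemma abs_transpose_mulVec_mulVec_sub_le {m k : Type*} [Fintype m] [Fintype k]
    {X : Matrix m k ℝ} {β β' : k → ℝ} {ε y : m → ℝ} {lam lam' : ℝ} (hy : y = X *ᵥ β + ε)
    (hnoise : ∀ j, |(Xᵀ *ᵥ ε) j| ≤ lam') (hfeas : ∀ j, |(Xᵀ *ᵥ (y - X *ᵥ β')) j| ≤ lam)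
    (j : k) : |(Xᵀ *ᵥ (X *ᵥ (β - β'))) j| ≤ lam + lam' := by
  have hres : X *ᵥ (β - β') = (y - X *ᵥ β') - ε := by
    rw [hy, mulVec_sub]
    abel
  rw [hres, mulVec_sub, Pi.sub_apply]
  exact (abs_sub _ _).trans (add_le_add (hfeas j) (hnoise j))

theorem stmt_6_general (n p : ℕ) (X : Matrix (Fin n) (Fin p) ℝ)
    (βstar βd : Fin p → ℝ) (ε y : Fin n → ℝ) (lamd lam0 : ℝ)
    (hy : y = X.mulVec βstar + ε)
    (hnoise : ∀ j, |Xᵀ.mulVec ε j| ≤ lam0)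
    (hlam : lam0 ≤ lamd)
    (hfeas : ∀ j, |Xᵀ.mulVec (y - X.mulVec βd) j| ≤ lamd)
    (hmin : ∀ β : Fin p → ℝ, (∀ j, |Xᵀ.mulVec (y - X.mulVec β) j| ≤ lamd) →
      l1 βd ≤ l1 β) :
    ∀ S : Finset (Fin p),
      (1 / (4 * lamd)) * ((∑ i, (X.mulVec (βstar - βd) i) ^ 2)
          + (lamd - lam0) * l1 (βstar - βd))
        ≤ l1 (restr (βstar - βd) S) + l1 (restr βstar Sᶜ) := by
  intro S
  set h := βstar - βd
  have hstar_feas : ∀ j, |Xᵀ.mulVec (y - X.mulVec βstar) j| ≤ lamd := by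
    intro j
    rw [hy, add_sub_cancel_left]
    exact (hnoise j).trans hlam
  have hcone := l1_sub_le_two_mul_of_l1_le (hmin βstar hstar_feas) S
  have hquad : ∑ i, (X.mulVec h i) ^ 2 ≤ l1 h * (lamd + lam0) := by
    rw [sum_sq_mulVec_eq_dotProduct]
    exact dotProduct_le_l1_mul (abs_transpose_mulVec_mulVec_sub_le hy hnoise hfeas)
  have hlhs : 0 ≤ ∑ i, (X.mulVec h i) ^ 2 + (lamd - lam0) * l1 h :=
    add_nonneg (sum_nonneg fun i _ => sq_nonneg _) (mul_nonneg (sub_nonneg.2 hlam) (l1_nonneg h))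
  have hrhs : 0 ≤ l1 (restr h S) + l1 (restr βstar Sᶜ) := add_nonneg (l1_nonneg _) (l1_nonneg _)
  rcases le_or_gt lamd 0 with hlamd | hlamd
  · exact (mul_nonpos_of_nonpos_of_nonneg (one_div_nonpos.2 (by linarith)) hlhs).trans hrhs
  · rw [one_div_mul_eq_div, div_le_iff₀ (by positivity)]
    nlinarith [mul_le_mul_of_nonneg_left hcone hlamd.le]

/-- Basic Dantzig-selector inequality: with `h = β* − β^d`, for all `S`,
`(1/(4λ_d))[‖Xh‖₂² + (λ_d − λ⁰)‖h‖₁] ≤ ‖h_S‖₁ + ‖β*_{Sᶜ}‖₁`. -/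
theorem stmt_6 (n p : ℕ) (X : Matrix (Fin n) (Fin p) ℝ)
    (βstar βd : Fin p → ℝ) (ε y : Fin n → ℝ) (lamd lam0 : ℝ)
    (hy : y = X.mulVec βstar + ε)
    (hnoise : ∀ j, |Xᵀ.mulVec ε j| ≤ lam0) (hlam0 : 0 ≤ lam0)
    (hlam : lam0 ≤ lamd)
    (hfeas : ∀ j, |Xᵀ.mulVec (y - X.mulVec βd) j| ≤ lamd)
    (hmin : ∀ β : Fin p → ℝ, (∀ j, |Xᵀ.mulVec (y - X.mulVec β) j| ≤ lamd) →
      l1 βd ≤ l1 β) :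
    ∀ S : Finset (Fin p),
      (1 / (4 * lamd)) * ((∑ i, (X.mulVec (βstar - βd) i) ^ 2)
          + (lamd - lam0) * l1 (βstar - βd))
        ≤ l1 (restr (βstar - βd) S) + l1 (restr βstar Sᶜ) :=
  stmt_6_general n p X βstar βd ε y lamd lam0 hy hnoise hlam hfeas hmin
end

section
/- Suppose X satisfies RIP(θ_{5S}) with θ_{5S} < √2 − 1. Let κ₀ satisfy [1 + 2((1−θ_{5S})/(1+θ_{5S}))^{1/2}]^{-1} < κ₀ < 1/2 and Δ ≥ [√(1−θ_{5S}) + ((κ₀−1)/(2κ₀))√(1+θ_{5S})]^{-1}. Then X satisfies UDP(S, κ₀, Δ): for all γ ∈ ℝ^p, s ≤ S, and T₀ with |T₀| = s, ‖γ_{T₀}‖₁ ≤ Δ√s‖Xγ‖₂ + κ₀‖γ‖₁. -/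
open Finset Matrix

/-!
Let `T₁` be the `4s` largest entries of `γ` off `T₀` and `A = T₀ ∪ T₁`. Since `A` is
`5s`-sparse, Cauchy–Schwarz and the lower RIP bound give
`‖γ_{T₀}‖₁ ≤ √s ‖γ_A‖₂ ≤ √s (‖Xγ‖₂ + ‖Xγ_{Aᶜ}‖₂) / √(1 - θ)`, and the block decomposition of
`Aᶜ` into further blocks of size `4s` with the upper RIP bound gives
`‖Xγ_{Aᶜ}‖₂ ≤ √(1 + θ) ‖γ_{T₀ᶜ}‖₁ / (2√s)`. Writing `‖γ_{T₀ᶜ}‖₁ = ‖γ‖₁ - ‖γ_{T₀}‖₁` yields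
`(√(1 - θ) + √(1 + θ)/2) ‖γ_{T₀}‖₁ ≤ √s ‖Xγ‖₂ + (√(1 + θ)/2) ‖γ‖₁`, and the conditions on
`κ₀` and `Δ` are exactly what is needed to divide this out.
-/

section Norms

variable {p : ℕ} (γ : Fin p → ℝ)

lemma l1_restr (B : Finset (Fin p)) : l1 (restr γ B) = ∑ i ∈ B, |γ i| := by
  simp [l1, restr, apply_ite, sum_ite_mem]

lemma l2_restr (B : Finset (Fin p)) : l2 (restr γ B) = √(∑ i ∈ B, γ i ^ 2) := by
  simp [l2, restr, sum_ite_mem]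

lemma l1_nonneg_s15 : 0 ≤ l1 γ := sum_nonneg fun _ _ => abs_nonneg _

lemma l2_zero {n : ℕ} : l2 (0 : Fin n → ℝ) = 0 := by
  simp [l2]

lemma l2_eq_norm : l2 γ = ‖WithLp.toLp 2 γ‖ := by
  simp [l2, EuclideanSpace.norm_eq, Real.norm_eq_abs, sq_abs]

lemma l2_add_le (u v : Fin p → ℝ) : l2 (u + v) ≤ l2 u + l2 v := by
  simpa only [l2_eq_norm, WithLp.toLp_add] using norm_add_le _ _

lemma l2_sub_le (u v : Fin p → ℝ) : l2 (u - v) ≤ l2 u + l2 v := by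
  simpa only [l2_eq_norm, WithLp.toLp_sub] using norm_sub_le _ _

lemma restr_empty : restr γ ∅ = 0 := by
  ext i; simp [restr]

lemma restr_add_restr_sdiff {T B : Finset (Fin p)} (h : T ⊆ B) :
    restr γ T + restr γ (B \ T) = restr γ B := by
  ext i
  by_cases hT : i ∈ T
  · simp [restr, hT, h hT]
  · simp [restr, hT]

lemma restr_univ : restr γ univ = γ := by
  ext i; simp [restr]

lemma card_support_restr_le (B : Finset (Fin p)) : #{i | restr γ B i ≠ 0} ≤ #B :=
  card_le_card fun i hi => by
    by_contra h
    simp [restr, h] at hi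

lemma l1_restr_le_sqrt_card_mul_l2_restr (B : Finset (Fin p)) :
    l1 (restr γ B) ≤ √(#B) * l2 (restr γ B) := by
  rw [l1_restr, l2_restr, ← Real.sqrt_mul (Nat.cast_nonneg _)]
  apply Real.le_sqrt_of_sq_le
  simpa only [sq_abs] using sq_sum_le_card_mul_sum_sq (s := B) (f := fun i => |γ i|)

lemma l2_restr_mono {A B : Finset (Fin p)} (h : A ⊆ B) : l2 (restr γ A) ≤ l2 (restr γ B) := by
  rw [l2_restr, l2_restr]
  exact Real.sqrt_le_sqrt (sum_le_sum_of_subset_of_nonneg h fun i _ _ => sq_nonneg _)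

lemma l2_restr_le_of_abs_le {B : Finset (Fin p)} {M : ℝ} (hM : 0 ≤ M)
    (h : ∀ j ∈ B, |γ j| ≤ M) : l2 (restr γ B) ≤ √(#B) * M := by
  rw [l2_restr, ← Real.sqrt_sq hM, ← Real.sqrt_mul (Nat.cast_nonneg _)]
  apply Real.sqrt_le_sqrt
  calc ∑ i ∈ B, γ i ^ 2 ≤ ∑ _i ∈ B, M ^ 2 := sum_le_sum fun i hi => by
        simpa only [sq_abs] using pow_le_pow_left₀ (abs_nonneg _) (h i hi) 2
    _ = #B * M ^ 2 := by rw [sum_const, nsmul_eq_mul]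

end Norms

section Blocks

variable {p : ℕ} (γ : Fin p → ℝ)

def IsTopBlock (k : ℕ) (B T : Finset (Fin p)) : Prop :=
  T ⊆ B ∧ #T = min k #B ∧ ∀ t ∈ T, ∀ j ∈ B \ T, |γ j| ≤ |γ t|

lemma exists_isTopBlock (k : ℕ) (B : Finset (Fin p)) : ∃ T, IsTopBlock γ k B T := by
  induction k generalizing B with
  | zero => exact ⟨∅, empty_subset _, by simp, by simp⟩
  | succ k ih =>
    obtain rfl | hB := B.eq_empty_or_nonempty
    · exact ⟨∅, empty_subset _, by simp, by simp⟩
    obtain ⟨t₀, ht₀B, ht₀max⟩ := exists_max_image B (fun i => |γ i|) hB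
    obtain ⟨T, hTB, hTcard, hTtop⟩ := ih (B.erase t₀)
    have ht₀T : t₀ ∉ T := fun h => (mem_erase.mp (hTB h)).1 rfl
    refine ⟨insert t₀ T, insert_subset ht₀B (hTB.trans (erase_subset _ _)), ?_, ?_⟩
    · rw [card_insert_of_notMem ht₀T, hTcard, card_erase_of_mem ht₀B]
      have := card_pos.mpr hB
      omega
    · intro t ht j hj
      simp only [mem_sdiff, mem_insert, not_or] at hj
      obtain rfl | ht := mem_insert.mp ht
      · exact ht₀max j hj.1
      · exact hTtop t ht j (mem_sdiff.mpr ⟨mem_erase.mpr ⟨hj.2.1, hj.1⟩, hj.2.2⟩)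

variable {n k : ℕ} {X : Matrix (Fin n) (Fin p) ℝ} {C : ℝ}

/-- Peeling off the blocks `T₁, T₂, …` of `k` largest entries one at a time: every entry of
`T_{j+1}` is at most the average of `|γ|` over `T_j`, so `‖γ_{T_{j+1}}‖₂ ≤ ‖γ_{T_j}‖₁ / √k`. -/
theorem l2_mulVec_restr_sdiff_le (hk : 0 < k) (hC : 0 ≤ C)
    (hX : ∀ v : Fin p → ℝ, #{i | v i ≠ 0} ≤ k → l2 (X *ᵥ v) ≤ C * l2 v)
    (B T : Finset (Fin p)) (hT : IsTopBlock γ k B T) :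
    l2 (X *ᵥ restr γ (B \ T)) ≤ C * l1 (restr γ B) / √k := by
  induction B using Finset.strongInduction generalizing T with
  | H B ih =>
  obtain ⟨hTB, hTcard, hTtop⟩ := hT
  set R := B \ T
  obtain hR | hR := R.eq_empty_or_nonempty
  · have := l1_nonneg_s15 (restr γ B)
    rw [hR, restr_empty, mulVec_zero, l2_zero]
    positivity
  have hTk : #T = k := by
    have : #R = #B - #T := card_sdiff_of_subset hTB
    have := card_pos.mpr hR
    omega
  have hRB : R ⊂ B := sdiff_ssubset hTB (card_pos.mp (hTk ▸ hk))
  obtain ⟨T', hT'⟩ := exists_isTopBlock γ k R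
  have hk' : (0 : ℝ) < k := Nat.cast_pos.mpr hk
  have hflat : ∀ j ∈ T', |γ j| ≤ (∑ t ∈ T, |γ t|) / k := fun j hj => by
    rw [le_div_iff₀ hk', ← hTk, mul_comm, ← nsmul_eq_mul]
    exact card_nsmul_le_sum _ _ _ fun t ht => hTtop t ht j (hT'.1 hj)
  have hT'bound : l2 (X *ᵥ restr γ T') ≤ C * (∑ t ∈ T, |γ t|) / √k := by
    have hT'k : #T' ≤ k := hT'.2.1 ▸ min_le_left _ _
    calc l2 (X *ᵥ restr γ T') ≤ C * l2 (restr γ T') :=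
          hX _ ((card_support_restr_le γ T').trans hT'k)
      _ ≤ C * (√k * ((∑ t ∈ T, |γ t|) / k)) := by
          gcongr
          exact (l2_restr_le_of_abs_le γ (by positivity) hflat).trans
            (by gcongr)
      _ = C * (∑ t ∈ T, |γ t|) / √k := by
          field_simp
          rw [Real.sq_sqrt hk'.le]
          ring
  calc l2 (X *ᵥ restr γ R)
      = l2 (X *ᵥ restr γ T' + X *ᵥ restr γ (R \ T')) := by
        rw [← mulVec_add, restr_add_restr_sdiff γ hT'.1]
    _ ≤ C * (∑ t ∈ T, |γ t|) / √k + C * l1 (restr γ R) / √k :=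
        (l2_add_le _ _).trans (add_le_add hT'bound (ih R hRB T' hT'))
    _ = C * l1 (restr γ B) / √k := by
        rw [l1_restr, l1_restr, ← sum_sdiff hTB]
        ring

end Blocks

section RIP

variable {n p : ℕ} {X : Matrix (Fin n) (Fin p) ℝ} {a b : ℝ} {s : ℕ}

theorem mul_l1_restr_le_of_rip (hs : 0 < s) (ha : 0 ≤ a) (hb : 0 ≤ b)
    (hlow : ∀ v : Fin p → ℝ, #{i | v i ≠ 0} ≤ 5 * s → a * l2 v ≤ l2 (X *ᵥ v))
    (hup : ∀ v : Fin p → ℝ, #{i | v i ≠ 0} ≤ 4 * s → l2 (X *ᵥ v) ≤ b * l2 v)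
    (γ : Fin p → ℝ) (T₀ : Finset (Fin p)) (hT₀ : #T₀ = s) :
    (a + b / 2) * l1 (restr γ T₀) ≤ √s * l2 (X *ᵥ γ) + b / 2 * l1 γ := by
  obtain ⟨T, hTB, hTcard, hTtop⟩ := exists_isTopBlock γ (4 * s) T₀ᶜ
  set A := T₀ ∪ T
  have hAcard : #A ≤ 5 * s := (card_union_le _ _).trans (by omega)
  have hs' : (0 : ℝ) < √s := Real.sqrt_pos.mpr (Nat.cast_pos.mpr hs)
  have hsqrt4 : √((4 * s : ℕ) : ℝ) = 2 * √s := by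
    push_cast
    rw [Real.sqrt_mul (by norm_num), show (4 : ℝ) = 2 ^ 2 by norm_num,
      Real.sqrt_sq (by norm_num)]
  have htail : l2 (X *ᵥ restr γ (T₀ᶜ \ T)) ≤ b * l1 (restr γ T₀ᶜ) / (2 * √s) :=
    hsqrt4 ▸ l2_mulVec_restr_sdiff_le γ (by omega) hb hup T₀ᶜ T ⟨hTB, hTcard, hTtop⟩
  have hsplit : restr γ A + restr γ (T₀ᶜ \ T) = γ := by
    have : T₀ᶜ \ T = univ \ A := by rw [compl_eq_univ_sdiff, sdiff_sdiff_left]; rfl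
    rw [this, restr_add_restr_sdiff γ (subset_univ A), restr_univ]
  have hA : a * l2 (restr γ A) ≤ l2 (X *ᵥ γ) + l2 (X *ᵥ restr γ (T₀ᶜ \ T)) := by
    calc a * l2 (restr γ A) ≤ l2 (X *ᵥ restr γ A) :=
          hlow _ ((card_support_restr_le γ A).trans hAcard)
      _ = l2 (X *ᵥ γ - X *ᵥ restr γ (T₀ᶜ \ T)) := by
          rw [← mulVec_sub, ← eq_sub_of_add_eq hsplit]
      _ ≤ _ := l2_sub_le _ _
  have hT₀ : l1 (restr γ T₀) ≤ √s * l2 (restr γ A) := by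
    calc l1 (restr γ T₀) ≤ √s * l2 (restr γ T₀) :=
          hT₀ ▸ l1_restr_le_sqrt_card_mul_l2_restr γ T₀
      _ ≤ √s * l2 (restr γ A) := by gcongr; exact l2_restr_mono γ subset_union_left
  have hl1 : l1 γ = l1 (restr γ T₀) + l1 (restr γ T₀ᶜ) := by
    rw [l1_restr, l1_restr, sum_add_sum_compl, l1]
  calc (a + b / 2) * l1 (restr γ T₀)
      ≤ √s * (a * l2 (restr γ A)) + b / 2 * l1 (restr γ T₀) := by
        have := mul_le_mul_of_nonneg_left hT₀ ha
        linarith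
    _ ≤ √s * (l2 (X *ᵥ γ) + b * l1 (restr γ T₀ᶜ) / (2 * √s)) + b / 2 * l1 (restr γ T₀) := by
        gcongr; exact hA.trans (by gcongr)
    _ = √s * l2 (X *ᵥ γ) + b / 2 * l1 γ := by
        rw [hl1]; field_simp; ring

end RIP

/-- Here `a = √(1 - θ)` and `b = √(1 + θ)`. -/
lemma udp_constants {a b κ₀ Δ : ℝ} (ha : 0 < a) (hb : 0 < b)
    (hκ₀ : (1 + 2 * (a / b))⁻¹ < κ₀) (hΔ : (a + (κ₀ - 1) / (2 * κ₀) * b)⁻¹ ≤ Δ) :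
    b / 2 ≤ κ₀ * (a + b / 2) ∧ 1 ≤ Δ * (a + b / 2) := by
  have hκ₀' : b < κ₀ * (b + 2 * a) := by
    rwa [show 1 + 2 * (a / b) = (b + 2 * a) / b by field_simp, inv_div,
      div_lt_iff₀ (by positivity)] at hκ₀
  have hκ₀pos : 0 < κ₀ := by nlinarith
  have hc : 0 < a + (κ₀ - 1) / (2 * κ₀) * b := by
    rw [show a + (κ₀ - 1) / (2 * κ₀) * b = (κ₀ * (b + 2 * a) - b) / (2 * κ₀) by field_simp; ring]
    exact div_pos (by linarith) (by positivity)
  have hcle : a + (κ₀ - 1) / (2 * κ₀) * b ≤ a + b / 2 := by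
    have : (κ₀ - 1) / (2 * κ₀) ≤ 1 / 2 := by
      rw [div_le_div_iff₀ (by positivity) (by norm_num)]; linarith
    nlinarith
  refine ⟨by linarith, ?_⟩
  calc 1 = (a + (κ₀ - 1) / (2 * κ₀) * b)⁻¹ * (a + (κ₀ - 1) / (2 * κ₀) * b) :=
        (inv_mul_cancel₀ hc.ne').symm
    _ ≤ Δ * (a + b / 2) := mul_le_mul hΔ hcle hc.le ((inv_pos.mpr hc).le.trans hΔ)

/-- Otherwise the square root vanishes and `κ₀` would lie in `(1, 1/2)`. -/
lemma sub_pos_and_add_pos_of_inv_lt {θ κ₀ : ℝ}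
    (h : (1 + 2 * √((1 - θ) / (1 + θ)))⁻¹ < κ₀ ∧ κ₀ < 1 / 2) : 0 < 1 - θ ∧ 0 < 1 + θ := by
  by_contra hθ
  have : (1 - θ) / (1 + θ) ≤ 0 := by
    rw [div_nonpos_iff]
    rw [not_and_or, not_lt, not_lt] at hθ
    rcases hθ with hθ | hθ
    · exact Or.inr ⟨hθ, by linarith⟩
    · exact Or.inl ⟨by linarith, hθ⟩
  rw [Real.sqrt_eq_zero'.mpr this] at h
  norm_num at h
  linarith

theorem stmt_15_general (n p : ℕ) (X : Matrix (Fin n) (Fin p) ℝ)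
    (S : ℕ) (θ κ₀ Δ : ℝ)
    (hRIP : ∀ γ : Fin p → ℝ, (Finset.univ.filter fun i => γ i ≠ 0).card ≤ 5 * S →
      (1 - θ) * (∑ i, (γ i) ^ 2) ≤ (∑ i, (X.mulVec γ i) ^ 2) ∧
      (∑ i, (X.mulVec γ i) ^ 2) ≤ (1 + θ) * (∑ i, (γ i) ^ 2))
    (hκ₀ : (1 + 2 * Real.sqrt ((1 - θ) / (1 + θ)))⁻¹ < κ₀ ∧ κ₀ < 1/2)
    (hΔ : (Real.sqrt (1 - θ) + ((κ₀ - 1) / (2 * κ₀)) * Real.sqrt (1 + θ))⁻¹ ≤ Δ) :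
    ∀ (γ : Fin p → ℝ) (s : ℕ), 1 ≤ s → s ≤ S → ∀ T₀ : Finset (Fin p), T₀.card = s →
      l1 (restr γ T₀) ≤ Δ * Real.sqrt s * l2 (X.mulVec γ) + κ₀ * l1 γ := by
  intro γ s hs hsS T₀ hT₀
  obtain ⟨hθ₁, hθ₂⟩ := sub_pos_and_add_pos_of_inv_lt hκ₀
  have ha : 0 < √(1 - θ) := Real.sqrt_pos.mpr hθ₁
  have hb : 0 < √(1 + θ) := Real.sqrt_pos.mpr hθ₂
  have hlow : ∀ v : Fin p → ℝ, #{i | v i ≠ 0} ≤ 5 * s → √(1 - θ) * l2 v ≤ l2 (X *ᵥ v) :=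
    fun v hv => by
      rw [l2, l2, ← Real.sqrt_mul hθ₁.le]
      exact Real.sqrt_le_sqrt (hRIP v (by omega)).1
  have hup : ∀ v : Fin p → ℝ, #{i | v i ≠ 0} ≤ 4 * s → l2 (X *ᵥ v) ≤ √(1 + θ) * l2 v :=
    fun v hv => by
      rw [l2, l2, ← Real.sqrt_mul hθ₂.le]
      exact Real.sqrt_le_sqrt (hRIP v (by omega)).2
  have hcore := mul_l1_restr_le_of_rip hs ha.le hb.le hlow hup γ T₀ hT₀
  obtain ⟨hκ, hΔ'⟩ := udp_constants ha hb (Real.sqrt_div hθ₁.le (1 + θ) ▸ hκ₀.1) hΔ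
  set d := √(1 - θ) + √(1 + θ) / 2
  have hx : 0 ≤ √s * l2 (X *ᵥ γ) := mul_nonneg (Real.sqrt_nonneg _) (Real.sqrt_nonneg _)
  refine le_of_mul_le_mul_left ?_ (by positivity : 0 < d)
  calc d * l1 (restr γ T₀) ≤ √s * l2 (X *ᵥ γ) + √(1 + θ) / 2 * l1 γ := hcore
    _ ≤ Δ * d * (√s * l2 (X *ᵥ γ)) + κ₀ * d * l1 γ :=
        add_le_add (le_mul_of_one_le_left hx hΔ') (mul_le_mul_of_nonneg_right hκ (l1_nonneg_s15 γ))
    _ = d * (Δ * √s * l2 (X *ᵥ γ) + κ₀ * l1 γ) := by ring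

/-- `RIP(θ_{5S})` with `θ_{5S} < √2 − 1` implies `UDP(S, κ₀, Δ)` for any admissible pair
`(κ₀, Δ)` (de Castro, Prop. 3.1). -/
theorem stmt_15 (n p : ℕ) (X : Matrix (Fin n) (Fin p) ℝ)
    (S : ℕ) (θ κ₀ Δ : ℝ) (hθ0 : 0 ≤ θ) (hθ : θ < Real.sqrt 2 - 1)
    (hRIP : ∀ γ : Fin p → ℝ, (Finset.univ.filter fun i => γ i ≠ 0).card ≤ 5 * S →
      (1 - θ) * (∑ i, (γ i) ^ 2) ≤ (∑ i, (X.mulVec γ i) ^ 2) ∧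
      (∑ i, (X.mulVec γ i) ^ 2) ≤ (1 + θ) * (∑ i, (γ i) ^ 2))
    (hκ₀ : (1 + 2 * Real.sqrt ((1 - θ) / (1 + θ)))⁻¹ < κ₀ ∧ κ₀ < 1/2)
    (hΔ : (Real.sqrt (1 - θ) + ((κ₀ - 1) / (2 * κ₀)) * Real.sqrt (1 + θ))⁻¹ ≤ Δ) :
    ∀ (γ : Fin p → ℝ) (s : ℕ), 1 ≤ s → s ≤ S → ∀ T₀ : Finset (Fin p), T₀.card = s →
      l1 (restr γ T₀) ≤ Δ * Real.sqrt s * l2 (X.mulVec γ) + κ₀ * l1 γ :=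
  stmt_15_general n p X S θ κ₀ Δ hRIP hκ₀ hΔ
end
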